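/- If A and B are abstract feature structures, then their unification A ⊔ B is an abstract feature structure: its path set is prefix-closed, it is fusion-closed, its reentrancy relation is an equivalence relation with finitely many classes, and its type assignment respects the equivalence. -/
import Mathlib



/-- A pre-abstract feature structure: a partial assignment of types to paths
(whose domain is the path set `Π`) together with a reentrancy relation. -/
structure PreAFS (F T : Type*) where
  theta : List F → Option T
  rel : List F → List F → Prop

/-- The path set `Π` of a pre-AFS. -/
def PreAFS.dom {F T : Type*} (A : PreAFS F T) : Set (List F) :=
  {π | (A.theta π).isSome}

/-- The pre-AFS conditions: `Π` is nonempty and `≈ ⊆ Π × Π`. -/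
def IsPreAFS {F T : Type*} (A : PreAFS F T) : Prop :=
  A.dom.Nonempty ∧ ∀ π₁ π₂, A.rel π₁ π₂ → π₁ ∈ A.dom ∧ π₂ ∈ A.dom

/-- `Π` is prefix-closed. -/
def PrefixClosed {F T : Type*} (A : PreAFS F T) : Prop :=
  ∀ π α : List F, π ++ α ∈ A.dom → π ∈ A.dom

/-- Fusion-closedness. -/
def FusionClosed {F T : Type*} (A : PreAFS F T) : Prop :=
  ∀ π π' α α' : List F, π ++ α ∈ A.dom → π' ++ α' ∈ A.dom → A.rel π π' →
    π ++ α' ∈ A.dom ∧ π' ++ α ∈ A.dom ∧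
    A.rel (π ++ α') (π' ++ α') ∧ A.rel (π' ++ α) (π ++ α)

/-- `≈` is an equivalence relation on `Π`. -/
def EquivOnDom {F T : Type*} (A : PreAFS F T) : Prop :=
  (∀ π ∈ A.dom, A.rel π π) ∧
  (∀ π₁ π₂, A.rel π₁ π₂ → A.rel π₂ π₁) ∧
  (∀ π₁ π₂ π₃, A.rel π₁ π₂ → A.rel π₂ π₃ → A.rel π₁ π₃)

/-- `≈` has finitely many equivalence classes. -/
def FiniteIndex {F T : Type*} (A : PreAFS F T) : Prop :=
  {C : Set (List F) | ∃ π ∈ A.dom, C = {π' | A.rel π π'}}.Finite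

/-- `Θ` respects the equivalence `≈`. -/
def RespectsRel {F T : Type*} (A : PreAFS F T) : Prop :=
  ∀ π₁ π₂, A.rel π₁ π₂ → A.theta π₁ = A.theta π₂

/-- Abstract feature structures. -/
def IsAFS {F T : Type*} (A : PreAFS F T) : Prop :=
  IsPreAFS A ∧ PrefixClosed A ∧ FusionClosed A ∧
    EquivOnDom A ∧ FiniteIndex A ∧ RespectsRel A

/-- Bounded completeness: every up-bounded subset has a least upper bound. -/
def BddCompleteTypes (T : Type*) [PartialOrder T] : Prop :=
  ∀ S : Set T, (∃ u, ∀ t ∈ S, t ≤ u) → ∃ l, IsLUB S l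

/-- Fusion-closedness of a pair (path set, relation). -/
def fusionClosedPair {F : Type*} (D : Set (List F)) (R : List F → List F → Prop) : Prop :=
  ∀ π π' α α' : List F, π ++ α ∈ D → π' ++ α' ∈ D → R π π' →
    π ++ α' ∈ D ∧ π' ++ α ∈ D ∧ R (π ++ α') (π' ++ α') ∧ R (π' ++ α) (π ++ α)

/-- The path set of the least fusion-closed extension. -/
def clDom {F T : Type*} (A : PreAFS F T) : Set (List F) :=
  {π | ∀ (D : Set (List F)) (R : List F → List F → Prop),
    A.dom ⊆ D → (∀ x y, A.rel x y → R x y) → fusionClosedPair D R → π ∈ D}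

/-- The reentrancy relation of the least fusion-closed extension. -/
def clRel {F T : Type*} (A : PreAFS F T) (x y : List F) : Prop :=
  ∀ (D : Set (List F)) (R : List F → List F → Prop),
    A.dom ⊆ D → (∀ a b, A.rel a b → R a b) → fusionClosedPair D R → R x y

open Classical in
/-- `Cl(A)`: the least extension of `A` to a fusion-closed pre-AFS
(`Θ` is kept on old paths; newly added paths get the trivial type `⊥`,
to be fixed up later by `Ty`). -/
noncomputable def Cl {F T : Type*} [CompleteLattice T] (A : PreAFS F T) : PreAFS F T :=
  ⟨fun π => if π ∈ clDom A then some ((A.theta π).getD ⊥) else none, clRel A⟩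

/-- The least extension of `≈` to an equivalence relation on `Π`. -/
inductive EqClo {F T : Type*} (A : PreAFS F T) : List F → List F → Prop
  | base {x y} : A.rel x y → EqClo A x y
  | refl {x} : x ∈ A.dom → EqClo A x x
  | symm {x y} : EqClo A x y → EqClo A y x
  | trans {x y z} : EqClo A x y → EqClo A y z → EqClo A x z

/-- `Eq(⟨Π,Θ,≈⟩) = ⟨Π,Θ,≈′⟩` where `≈′` is the least equivalence relation
on `Π` containing `≈`. -/
def EqOp {F T : Type*} (A : PreAFS F T) : PreAFS F T := ⟨A.theta, EqClo A⟩

/-- `Ty(⟨Π,Θ,≈⟩) = ⟨Π,Θ′,≈⟩` where `Θ′(π) = ⊔_{π′ ≈ π} Θ(π′)`. -/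
noncomputable def Ty {F T : Type*} [CompleteLattice T] (A : PreAFS F T) : PreAFS F T :=
  ⟨fun π => if (A.theta π).isSome then
      some (sSup {t | ∃ π', A.rel π π' ∧ A.theta π' = some t})
    else none,
   A.rel⟩

/-- The pre-AFS `C` of the definition of unification: `Π_C = Π_A ∪ Π_B`,
`≈_C = ≈_A ∪ ≈_B`, and `Θ_C` is the pointwise type unification. -/
noncomputable def baseUnif {F T : Type*} [CompleteLattice T] (A B : PreAFS F T) :
    PreAFS F T :=
  ⟨fun π => match A.theta π, B.theta π with
    | some t₁, some t₂ => some (t₁ ⊔ t₂)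
    | some t₁, none => some t₁
    | none, some t₂ => some t₂
    | none, none => none,
   fun x y => A.rel x y ∨ B.rel x y⟩

/-- The unification `A ⊔ B = Ty(Eq(Cl(C)))` of two AFSs. -/
noncomputable def unif {F T : Type*} [CompleteLattice T] (A B : PreAFS F T) : PreAFS F T :=
  Ty (EqOp (Cl (baseUnif A B)))

/- ======================= Auxiliary development ======================= -/

universe u v

section Aux

variable {F : Type u} {T : Type v}

mutual
/-- Inductive characterization of the fusion closure: the path set. -/
inductive ClD (C : PreAFS F T) : List F → Prop
  | base {π} : π ∈ C.dom → ClD C π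
  | fuse1 {π π' α α'} : ClD C (π ++ α) → ClD C (π' ++ α') → ClR C π π' → ClD C (π ++ α')
  | fuse2 {π π' α α'} : ClD C (π ++ α) → ClD C (π' ++ α') → ClR C π π' → ClD C (π' ++ α)

/-- Inductive characterization of the fusion closure: the relation. -/
inductive ClR (C : PreAFS F T) : List F → List F → Prop
  | base {x y} : C.rel x y → ClR C x y
  | fuse1 {π π' α α'} : ClD C (π ++ α) → ClD C (π' ++ α') → ClR C π π' →
      ClR C (π ++ α') (π' ++ α')
  | fuse2 {π π' α α'} : ClD C (π ++ α) → ClD C (π' ++ α') → ClR C π π' →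
      ClR C (π' ++ α) (π ++ α)
end

lemma fusionClosedPair_cl (C : PreAFS F T) :
    fusionClosedPair {x | ClD C x} (ClR C) := by
  intro π π' α α' h1 h2 h3
  exact ⟨ClD.fuse1 h1 h2 h3, ClD.fuse2 h1 h2 h3, ClR.fuse1 h1 h2 h3, ClR.fuse2 h1 h2 h3⟩

lemma clD_subset (C : PreAFS F T) : ∀ x, ClD C x → x ∈ clDom C := by
  intro x h
  refine ClD.rec (C := C) (motive_1 := fun x _ => x ∈ clDom C)
    (motive_2 := fun x y _ => clRel C x y) ?_ ?_ ?_ ?_ ?_ ?_ h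
  · intro π hπ D R hD hR hF; exact hD hπ
  · intro π π' α α' _ _ _ ih1 ih2 ih3 D R hD hR hF
    exact (hF π π' α α' (ih1 D R hD hR hF) (ih2 D R hD hR hF) (ih3 D R hD hR hF)).1
  · intro π π' α α' _ _ _ ih1 ih2 ih3 D R hD hR hF
    exact (hF π π' α α' (ih1 D R hD hR hF) (ih2 D R hD hR hF) (ih3 D R hD hR hF)).2.1
  · intro x y hxy D R hD hR hF; exact hR x y hxy
  · intro π π' α α' _ _ _ ih1 ih2 ih3 D R hD hR hF
    exact (hF π π' α α' (ih1 D R hD hR hF) (ih2 D R hD hR hF) (ih3 D R hD hR hF)).2.2.1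
  · intro π π' α α' _ _ _ ih1 ih2 ih3 D R hD hR hF
    exact (hF π π' α α' (ih1 D R hD hR hF) (ih2 D R hD hR hF) (ih3 D R hD hR hF)).2.2.2

lemma clDom_eq (C : PreAFS F T) : clDom C = {x | ClD C x} := by
  ext x
  constructor
  · intro hx
    exact hx {x | ClD C x} (ClR C) (fun p hp => ClD.base hp) (fun a b h => ClR.base h)
      (fusionClosedPair_cl C)
  · exact clD_subset C x

lemma clRel_iff (C : PreAFS F T) (x y : List F) : clRel C x y ↔ ClR C x y := by
  constructor
  · intro h
    exact h {x | ClD C x} (ClR C) (fun p hp => ClD.base hp) (fun a b h => ClR.base h)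
      (fusionClosedPair_cl C)
  · intro h
    refine ClR.rec (C := C) (motive_1 := fun x _ => x ∈ clDom C)
      (motive_2 := fun x y _ => clRel C x y) ?_ ?_ ?_ ?_ ?_ ?_ h
    · intro π hπ D R hD hR hF; exact hD hπ
    · intro π π' α α' _ _ _ ih1 ih2 ih3 D R hD hR hF
      exact (hF π π' α α' (ih1 D R hD hR hF) (ih2 D R hD hR hF) (ih3 D R hD hR hF)).1
    · intro π π' α α' _ _ _ ih1 ih2 ih3 D R hD hR hF
      exact (hF π π' α α' (ih1 D R hD hR hF) (ih2 D R hD hR hF) (ih3 D R hD hR hF)).2.1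
    · intro x y hxy D R hD hR hF; exact hR x y hxy
    · intro π π' α α' _ _ _ ih1 ih2 ih3 D R hD hR hF
      exact (hF π π' α α' (ih1 D R hD hR hF) (ih2 D R hD hR hF) (ih3 D R hD hR hF)).2.2.1
    · intro π π' α α' _ _ _ ih1 ih2 ih3 D R hD hR hF
      exact (hF π π' α α' (ih1 D R hD hR hF) (ih2 D R hD hR hF) (ih3 D R hD hR hF)).2.2.2

lemma dom_subset_clDom (C : PreAFS F T) : C.dom ⊆ clDom C :=
  fun _ hx D _ hD _ _ => hD hx

/-- Endpoints of `ClR` are in `ClD`. -/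
lemma clR_mem (C : PreAFS F T) (hC : ∀ x y, C.rel x y → x ∈ C.dom ∧ y ∈ C.dom) :
    ∀ x y, ClR C x y → ClD C x ∧ ClD C y := by
  intro x y h
  refine ClR.rec (C := C) (motive_1 := fun _ _ => True)
    (motive_2 := fun x y _ => ClD C x ∧ ClD C y) ?_ ?_ ?_ ?_ ?_ ?_ h
  · intro _ _; trivial
  · intro _ _ _ _ _ _ _ _ _ _; trivial
  · intro _ _ _ _ _ _ _ _ _ _; trivial
  · intro x y hxy; exact ⟨ClD.base (hC x y hxy).1, ClD.base (hC x y hxy).2⟩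
  · intro π π' α α' h1 h2 h3 _ _ _; exact ⟨ClD.fuse1 h1 h2 h3, h2⟩
  · intro π π' α α' h1 h2 h3 _ _ _; exact ⟨ClD.fuse2 h1 h2 h3, h1⟩

/-- `ClD` is prefix-closed if the base is. -/
lemma clD_prefix (C : PreAFS F T) (hpc : PrefixClosed C) :
    ∀ x, ClD C x → ∀ σ β : List F, x = σ ++ β → ClD C σ := by
  intro x h
  refine ClD.rec (C := C)
    (motive_1 := fun x _ => ∀ σ β : List F, x = σ ++ β → ClD C σ)
    (motive_2 := fun _ _ _ => True) ?_ ?_ ?_ ?_ ?_ ?_ h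
  · intro π hπ σ β heq
    exact ClD.base (hpc σ β (heq ▸ hπ))
  · intro π π' α α' h1 h2 h3 ih1 ih2 _ σ β heq
    have hσ : σ <+: π ++ α' := ⟨β, heq.symm⟩
    rcases List.prefix_or_prefix_of_prefix hσ (List.prefix_append π α') with h | h
    · obtain ⟨δ, rfl⟩ := h
      exact ih1 σ (δ ++ α) (List.append_assoc σ δ α)
    · obtain ⟨γ, rfl⟩ := h
      have hα : α' = γ ++ β := by
        apply List.append_cancel_left (as := π)
        rw [heq, List.append_assoc]
      have hγ : ClD C (π' ++ γ) := ih2 (π' ++ γ) β (by rw [hα, List.append_assoc])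
      exact ClD.fuse1 h1 hγ h3
  · intro π π' α α' h1 h2 h3 ih1 ih2 _ σ β heq
    have hσ : σ <+: π' ++ α := ⟨β, heq.symm⟩
    rcases List.prefix_or_prefix_of_prefix hσ (List.prefix_append π' α) with h | h
    · obtain ⟨δ, rfl⟩ := h
      exact ih2 σ (δ ++ α') (List.append_assoc σ δ α')
    · obtain ⟨γ, rfl⟩ := h
      have hα : α = γ ++ β := by
        apply List.append_cancel_left (as := π')
        rw [heq, List.append_assoc]
      have hγ : ClD C (π ++ γ) := ih1 (π ++ γ) β (by rw [hα, List.append_assoc])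
      exact ClD.fuse2 hγ h2 h3
  · intro _ _ _; trivial
  · intro _ _ _ _ _ _ _ _ _ _; trivial
  · intro _ _ _ _ _ _ _ _ _ _; trivial

/-- Endpoints of `EqClo` are in the domain. -/
lemma eqClo_mem (X : PreAFS F T) (hX : ∀ x y, X.rel x y → x ∈ X.dom ∧ y ∈ X.dom) :
    ∀ x y, EqClo X x y → x ∈ X.dom ∧ y ∈ X.dom := by
  intro x y h
  induction h with
  | base h => exact hX _ _ h
  | refl h => exact ⟨h, h⟩
  | symm _ ih => exact ⟨ih.2, ih.1⟩
  | trans _ _ ih1 ih2 => exact ⟨ih1.1, ih2.2⟩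

/-- Equivalence closure preserves fusion-closedness. -/
lemma eqClo_fusion (X : PreAFS F T) (hF : fusionClosedPair X.dom X.rel)
    (hX : ∀ x y, X.rel x y → x ∈ X.dom ∧ y ∈ X.dom) :
    fusionClosedPair X.dom (EqClo X) := by
  have hmem := eqClo_mem X hX
  suffices H : ∀ π π', EqClo X π π' → ∀ α α' : List F,
      π ++ α ∈ X.dom → π' ++ α' ∈ X.dom →
      π ++ α' ∈ X.dom ∧ π' ++ α ∈ X.dom ∧
        EqClo X (π ++ α') (π' ++ α') ∧ EqClo X (π' ++ α) (π ++ α) by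
    intro π π' α α' h1 h2 h3
    exact H π π' h3 α α' h1 h2
  intro π π' h3
  induction h3 with
  | @base x y h =>
    intro α α' h1 h2
    obtain ⟨d1, d2, r1, r2⟩ := hF x y α α' h1 h2 h
    exact ⟨d1, d2, EqClo.base r1, EqClo.base r2⟩
  | refl h =>
    intro α α' h1 h2
    exact ⟨h2, h1, EqClo.refl h2, EqClo.refl h1⟩
  | symm h ih =>
    intro α α' h1 h2
    obtain ⟨d1, d2, r1, r2⟩ := ih α' α h2 h1
    exact ⟨d2, d1, r2, r1⟩
  | @trans x y z hxy hyz ih1 ih2 =>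
    intro α α' h1 h2
    have hy : y ++ ([] : List F) ∈ X.dom := by
      simpa using (hmem _ _ hxy).2
    obtain ⟨e1, e2, s1, s2⟩ := ih1 α [] h1 hy
    obtain ⟨f1, f2, t1, t2⟩ := ih2 α α' e2 h2
    obtain ⟨g1, g2, u1, u2⟩ := ih1 α α' h1 f1
    exact ⟨g1, f2, u1.trans t1, t2.trans u2⟩

section Lattice
variable [CompleteLattice T]

lemma Cl_dom (C : PreAFS F T) : (Cl C).dom = clDom C := by
  ext π
  simp only [PreAFS.dom, Cl, Set.mem_setOf_eq]
  by_cases h : π ∈ clDom C <;> simp [h]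

lemma Cl_rel (C : PreAFS F T) : (Cl C).rel = clRel C := rfl

lemma Ty_dom (X : PreAFS F T) : (Ty X).dom = X.dom := by
  ext π
  simp only [PreAFS.dom, Ty, Set.mem_setOf_eq]
  by_cases h : (X.theta π).isSome <;> simp [h]

lemma unif_dom (A B : PreAFS F T) : (unif A B).dom = clDom (baseUnif A B) := by
  rw [unif, Ty_dom]
  show (Cl (baseUnif A B)).dom = _
  exact Cl_dom _

lemma unif_rel (A B : PreAFS F T) : (unif A B).rel = EqClo (Cl (baseUnif A B)) := rfl

lemma baseUnif_dom (A B : PreAFS F T) : (baseUnif A B).dom = A.dom ∪ B.dom := by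
  ext π
  simp only [PreAFS.dom, Set.mem_setOf_eq, Set.mem_union, baseUnif]
  rcases hA : A.theta π with _ | t <;> rcases hB : B.theta π with _ | s <;> simp

end Lattice

end Aux
section Aux2
universe u' v'
variable {F : Type u'} {T : Type v'} [CompleteLattice T]

/-- Every path in the fusion closure is equivalent to an original path. -/
lemma clD_meets (C : PreAFS F T) :
    ∀ x, ClD C x → ∃ q ∈ C.dom, EqClo (Cl C) x q := by
  intro x h
  refine ClD.rec (C := C)
    (motive_1 := fun x _ => ∃ q ∈ C.dom, EqClo (Cl C) x q)
    (motive_2 := fun _ _ _ => True) ?_ ?_ ?_ ?_ ?_ ?_ h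
  · intro π hπ
    refine ⟨π, hπ, EqClo.refl ?_⟩
    rw [Cl_dom]; exact dom_subset_clDom C hπ
  · intro π π' α α' h1 h2 h3 _ ih2 _
    obtain ⟨q, hq, hrel⟩ := ih2
    exact ⟨q, hq, EqClo.trans (EqClo.base ((clRel_iff C _ _).2 (ClR.fuse1 h1 h2 h3))) hrel⟩
  · intro π π' α α' h1 h2 h3 ih1 _ _
    obtain ⟨q, hq, hrel⟩ := ih1
    exact ⟨q, hq, EqClo.trans (EqClo.base ((clRel_iff C _ _).2 (ClR.fuse2 h1 h2 h3))) hrel⟩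
  · intros; trivial
  · intro _ _ _ _ _ _ _ _ _ _; trivial
  · intro _ _ _ _ _ _ _ _ _ _; trivial

lemma Ty_respects (X : PreAFS F T)
    (hdom : ∀ x y, X.rel x y → x ∈ X.dom ∧ y ∈ X.dom)
    (hsymm : ∀ x y, X.rel x y → X.rel y x)
    (htrans : ∀ x y z, X.rel x y → X.rel y z → X.rel x z) :
    RespectsRel (Ty X) := by
  intro π₁ π₂ h
  have h' : X.rel π₁ π₂ := h
  have h1 : (X.theta π₁).isSome := (hdom _ _ h').1
  have h2 : (X.theta π₂).isSome := (hdom _ _ h').2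
  simp only [Ty]
  rw [if_pos h1, if_pos h2]
  congr 1
  congr 1
  ext t
  simp only [Set.mem_setOf_eq]
  constructor
  · rintro ⟨π', hr, ht⟩; exact ⟨π', htrans _ _ _ (hsymm _ _ h') hr, ht⟩
  · rintro ⟨π', hr, ht⟩; exact ⟨π', htrans _ _ _ h' hr, ht⟩

end Aux2

/-- if `A` and `B` are AFSs, then so is their unification `A ⊔ B`. -/
theorem isAFS_unif
    {F T : Type*} [Finite F] [Finite T] [CompleteLattice T]
    (A B : PreAFS F T) (hA : IsAFS A) (hB : IsAFS B) :
    IsAFS (unif A B) := by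
  classical
  set C := baseUnif A B with hCdef
  have hCmem : ∀ x y, C.rel x y → x ∈ C.dom ∧ y ∈ C.dom := by
    intro x y h
    have h' : A.rel x y ∨ B.rel x y := h
    rw [hCdef, baseUnif_dom]
    rcases h' with h' | h'
    · exact ⟨Or.inl (hA.1.2 x y h').1, Or.inl (hA.1.2 x y h').2⟩
    · exact ⟨Or.inr (hB.1.2 x y h').1, Or.inr (hB.1.2 x y h').2⟩
  have hdom : (unif A B).dom = {x | ClD C x} := by rw [unif_dom, clDom_eq]
  have hdc : (unif A B).dom = (Cl C).dom := by rw [unif_dom, Cl_dom]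
  have hClmem : ∀ x y, (Cl C).rel x y → x ∈ (Cl C).dom ∧ y ∈ (Cl C).dom := by
    intro x y h
    have h' : ClR C x y := (clRel_iff C x y).1 h
    rw [Cl_dom, clDom_eq]
    exact clR_mem C hCmem x y h'
  have hEmem : ∀ x y, EqClo (Cl C) x y → x ∈ (Cl C).dom ∧ y ∈ (Cl C).dom :=
    eqClo_mem (Cl C) hClmem
  have hpcC : PrefixClosed C := by
    intro π α h
    rw [hCdef, baseUnif_dom] at h ⊢
    rcases h with h | h
    · exact Or.inl (hA.2.1 π α h)
    · exact Or.inr (hB.2.1 π α h)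
  refine ⟨⟨?_, ?_⟩, ?_, ?_, ⟨?_, ?_, ?_⟩, ?_, ?_⟩
  · -- nonempty
    obtain ⟨π, hπ⟩ := hA.1.1
    refine ⟨π, ?_⟩
    rw [hdom]
    exact ClD.base (by rw [hCdef, baseUnif_dom]; exact Or.inl hπ)
  · -- rel ⊆ dom × dom
    intro π₁ π₂ h
    have h' : EqClo (Cl C) π₁ π₂ := h
    have := hEmem π₁ π₂ h'
    rw [hdc]
    exact this
  · -- PrefixClosed
    intro π α h
    rw [hdom] at h ⊢
    exact clD_prefix C hpcC _ h π α rfl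
  · -- FusionClosed
    have hReq : (Cl C).rel = ClR C := by
      funext x y; exact propext (clRel_iff C x y)
    have hFCl : fusionClosedPair (Cl C).dom (Cl C).rel := by
      rw [Cl_dom, clDom_eq, hReq]
      exact fusionClosedPair_cl C
    have hFE : fusionClosedPair (Cl C).dom (EqClo (Cl C)) :=
      eqClo_fusion (Cl C) hFCl hClmem
    intro π π' α α' h1 h2 h3
    rw [hdc] at h1 h2
    have h3' : EqClo (Cl C) π π' := h3
    obtain ⟨d1, d2, r1, r2⟩ := hFE π π' α α' h1 h2 h3'
    rw [hdc]
    exact ⟨d1, d2, r1, r2⟩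
  · -- refl
    intro π hπ
    rw [hdc] at hπ
    exact EqClo.refl hπ
  · -- symm
    intro a b h
    exact EqClo.symm (show EqClo (Cl C) a b from h)
  · -- trans
    intro a b c h1 h2
    exact EqClo.trans (show EqClo (Cl C) a b from h1) (show EqClo (Cl C) b c from h2)
  · -- FiniteIndex
    have hmeets := clD_meets C
    have hfinA : ({S : Set (List F) | ∃ π ∈ A.dom, S = {π' | A.rel π π'}}).Finite := hA.2.2.2.2.1
    have hfinB : ({S : Set (List F) | ∃ π ∈ B.dom, S = {π' | B.rel π π'}}).Finite := hB.2.2.2.2.1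
    set clsA : Set (Set (List F)) := {S | ∃ π ∈ A.dom, S = {π' | A.rel π π'}} with hclsA
    set clsB : Set (Set (List F)) := {S | ∃ π ∈ B.dom, S = {π' | B.rel π π'}} with hclsB
    set f : Set (List F) → Set (Set (List F)) × Set (Set (List F)) :=
      fun K => ({S | S ∈ clsA ∧ ∃ p ∈ S, p ∈ K}, {S | S ∈ clsB ∧ ∃ p ∈ S, p ∈ K}) with hf
    show ({K : Set (List F) | ∃ π ∈ (unif A B).dom, K = {π' | (unif A B).rel π π'}}).Finite
    apply Set.Finite.of_finite_image (f := f)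
    · apply Set.Finite.subset ((hfinA.finite_subsets).prod (hfinB.finite_subsets))
      rintro _ ⟨K, hK, rfl⟩
      exact ⟨fun S hS => hS.1, fun S hS => hS.1⟩
    · rintro K ⟨π, hπ, rfl⟩ K' ⟨π', hπ', rfl⟩ hfeq
      rw [hdom] at hπ hπ'
      have hππ' : EqClo (Cl C) π π' := by
        obtain ⟨q, hq, hπq⟩ := hmeets π hπ
        rw [hCdef, baseUnif_dom] at hq
        have h1 := congrArg Prod.fst hfeq
        have h2 := congrArg Prod.snd hfeq
        rcases hq with hq | hq
        · have hq_self : A.rel q q := hA.2.2.2.1.1 q hq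
          have hmemK : ({x | A.rel q x}) ∈ (f {π'' | (unif A B).rel π π''}).1 :=
            ⟨⟨q, hq, rfl⟩, q, hq_self, show EqClo (Cl C) π q from hπq⟩
          have hmemK' : ({x | A.rel q x}) ∈ (f {π'' | (unif A B).rel π' π''}).1 := h1 ▸ hmemK
          obtain ⟨-, p, hpA, hpK'⟩ := hmemK'
          have hpA' : A.rel q p := hpA
          have hπ'p : EqClo (Cl C) π' p := hpK'
          have hqp : EqClo (Cl C) q p :=
            EqClo.base ((clRel_iff C _ _).2 (ClR.base (Or.inl hpA')))
          exact (hπq.trans hqp).trans (EqClo.symm hπ'p)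
        · have hq_self : B.rel q q := hB.2.2.2.1.1 q hq
          have hmemK : ({x | B.rel q x}) ∈ (f {π'' | (unif A B).rel π π''}).2 :=
            ⟨⟨q, hq, rfl⟩, q, hq_self, show EqClo (Cl C) π q from hπq⟩
          have hmemK' : ({x | B.rel q x}) ∈ (f {π'' | (unif A B).rel π' π''}).2 := h2 ▸ hmemK
          obtain ⟨-, p, hpB, hpK'⟩ := hmemK'
          have hpB' : B.rel q p := hpB
          have hπ'p : EqClo (Cl C) π' p := hpK'
          have hqp : EqClo (Cl C) q p :=
            EqClo.base ((clRel_iff C _ _).2 (ClR.base (Or.inr hpB')))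
          exact (hπq.trans hqp).trans (EqClo.symm hπ'p)
      ext z
      simp only [Set.mem_setOf_eq]
      constructor
      · intro hz
        exact EqClo.trans (EqClo.symm hππ') (show EqClo (Cl C) π z from hz)
      · intro hz
        exact EqClo.trans hππ' (show EqClo (Cl C) π' z from hz)
  · -- RespectsRel
    show RespectsRel (Ty (EqOp (Cl C)))
    refine Ty_respects _ ?_ ?_ ?_
    · intro x y h
      exact hEmem x y h
    · intro x y h
      exact EqClo.symm h
    · intro x y z h1 h2
      exact EqClo.trans h1 h2
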